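/- arXiv:1412.1634 — 4 statements merged into one kernel-verified Lean document; each statement's English description precedes it below -/
import Mathlib

section
/- Let r ≥ 1, 0<q<1, and let a = (a_1,…,a_{r+1}), b = (b_1,…,b_r), c = (c_1,…,c_r) be real parameters with a_j > 0 for all j, and b_i > c_i > 0 and b_i > 1 for i = 1,…,r. Then for all x with 0 < x < 1 the Turán type inequality [Φ(q^{a_1},…,q^{a_{r+1}}; q^{b_1},…,q^{b_r}; q, x)]² < Φ(q^{a_1},…,q^{a_{r+1}}; q^{b_1-c_1},…,q^{b_r-c_r}; q, x)·Φ(q^{a_1},…,q^{a_{r+1}}; q^{b_1+c_1},…,q^{b_r+c_r}; q, x) holds. -/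
/-- The q-shifted factorial `(a;q)_n = ∏_{k=0}^{n-1} (1 - a q^k)`. -/
noncomputable def qPoch (q a : ℝ) (n : ℕ) : ℝ :=
  ∏ k ∈ Finset.range n, (1 - a * q ^ k)

/-- The basic (q-)hypergeometric series with `r+1` upper and `r` lower parameters. -/
noncomputable def qHyp (q : ℝ) (r : ℕ) (a : Fin (r + 1) → ℝ) (b : Fin r → ℝ) (x : ℝ) : ℝ :=
  ∑' n : ℕ,
    (∏ j, qPoch q (q ^ a j) n) / ((∏ j, qPoch q (q ^ b j) n) * qPoch q q n) * x ^ n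


/-! The `n`-th terms `w n`, `u n`, `v n` of the three series share their numerators, and
`w n ^ 2 / (u n * v n)` is the product over `i` and `k < n` of
`(1 - q ^ (b i - c i + k)) (1 - q ^ (b i + c i + k)) / (1 - q ^ (b i + k)) ^ 2`.
Since `q ^ (b - c) * q ^ (b + c) = (q ^ b) ^ 2` and `q ^ (b - c) ≠ q ^ (b + c)`, AM–GM makes each
factor `< 1`, so `w n ^ 2 ≤ u n * v n`, strictly for `n ≥ 1`. Cauchy–Schwarz for series,
`(∑ w) ^ 2 < (∑ √(u v)) ^ 2 ≤ ∑ u * ∑ v`, finishes the proof. -/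

open Finset Filter Topology

section CauchySchwarz

variable {ι : Type*} {u v w : ι → ℝ}

theorem tsum_sq_le_tsum_mul_tsum (hw : Summable w) (hu : Summable u) (hv : Summable v)
    (hu0 : ∀ i, 0 ≤ u i) (hv0 : ∀ i, 0 ≤ v i) (h : ∀ i, w i ^ 2 ≤ u i * v i) :
    (∑' i, w i) ^ 2 ≤ (∑' i, u i) * ∑' i, v i :=
  le_of_tendsto_of_tendsto' (hw.hasSum.pow 2) (Tendsto.mul hu.hasSum hv.hasSum) fun s =>
    sum_sq_le_sum_mul_sum_of_sq_le_mul s (fun i _ => hu0 i) (fun i _ => hv0 i) fun i _ => h i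

theorem tsum_sq_lt_tsum_mul_tsum (hu : Summable u) (hv : Summable v)
    (hu0 : ∀ i, 0 ≤ u i) (hv0 : ∀ i, 0 ≤ v i) (hle : ∀ i, w i ^ 2 ≤ u i * v i)
    (hlt : ∃ i, w i ^ 2 < u i * v i) :
    (∑' i, w i) ^ 2 < (∑' i, u i) * ∑' i, v i := by
  obtain ⟨i₀, hi₀⟩ := hlt
  set s : ι → ℝ := fun i => √(u i * v i)
  have hs : Summable s := by
    refine .of_nonneg_of_le (fun i => Real.sqrt_nonneg _) (fun i => ?_) ((hu.add hv).div_const 2)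
    rw [Real.sqrt_le_iff]
    constructor
    · linarith [hu0 i, hv0 i]
    · nlinarith [sq_nonneg (u i - v i)]
  have hws : ∀ i, ‖w i‖ ≤ s i := fun i => Real.abs_le_sqrt (hle i)
  have hws₀ : ‖w i₀‖ < s i₀ := Real.lt_sqrt_of_sq_lt (by rwa [Real.norm_eq_abs, sq_abs])
  have hw : Summable w := .of_norm_bounded hs hws
  have hlt_s : ‖∑' i, w i‖ < ∑' i, s i :=
    (norm_tsum_le_tsum_norm hw.norm).trans_lt (hw.norm.tsum_lt_tsum hws hws₀ hs)
  calc (∑' i, w i) ^ 2 = ‖∑' i, w i‖ ^ 2 := by rw [Real.norm_eq_abs, sq_abs]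
    _ < (∑' i, s i) ^ 2 := pow_lt_pow_left₀ hlt_s (norm_nonneg _) two_ne_zero
    _ ≤ (∑' i, u i) * ∑' i, v i :=
      tsum_sq_le_tsum_mul_tsum hs hu hv hu0 hv0 fun i =>
        (Real.sq_sqrt (mul_nonneg (hu0 i) (hv0 i))).le

end CauchySchwarz

section QPochhammer

variable {q t : ℝ}

lemma one_sub_mul_pow_pos (hq0 : 0 ≤ q) (hq1 : q ≤ 1) (ht : t < 1) (k : ℕ) :
    0 < 1 - t * q ^ k := by
  have h0 : 0 ≤ q ^ k := pow_nonneg hq0 k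
  have h1 : q ^ k ≤ 1 := pow_le_one₀ hq0 hq1
  rcases le_or_gt t 0 with ht0 | ht0
  · nlinarith [mul_nonpos_of_nonpos_of_nonneg ht0 h0]
  · nlinarith [mul_le_mul_of_nonneg_left h1 ht0.le]

lemma qPoch_pos (hq0 : 0 ≤ q) (hq1 : q ≤ 1) (ht : t < 1) (n : ℕ) : 0 < qPoch q t n :=
  prod_pos fun k _ => one_sub_mul_pow_pos hq0 hq1 ht k

lemma qPoch_rpow_pos {a : ℝ} (hq0 : 0 < q) (hq1 : q < 1) (ha : 0 < a) (n : ℕ) :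
    0 < qPoch q (q ^ a) n :=
  qPoch_pos hq0.le hq1.le (Real.rpow_lt_one hq0.le hq1 ha) n

lemma qPoch_zero (q t : ℝ) : qPoch q t 0 = 1 := prod_range_zero _

lemma qPoch_succ (q t : ℝ) (n : ℕ) : qPoch q t (n + 1) = qPoch q t n * (1 - t * q ^ n) :=
  prod_range_succ _ n

lemma one_sub_mul_mul_one_sub_mul_lt_sq {A B C s : ℝ} (hA : 0 ≤ A) (hB : 0 ≤ B) (hC : 0 ≤ C)
    (hBC : B ≠ C) (hABC : B * C = A ^ 2) (hs : 0 < s) :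
    (1 - B * s) * (1 - C * s) < (1 - A * s) ^ 2 := by
  have hAM : 2 * A < B + C := by nlinarith [sq_pos_of_ne_zero (sub_ne_zero.2 hBC)]
  have hdiff : (1 - A * s) ^ 2 - (1 - B * s) * (1 - C * s) = (B + C - 2 * A) * s := by
    linear_combination (-s ^ 2) * hABC
  linarith [mul_pos (sub_pos.2 hAM) hs]

lemma qPoch_rpow_sub_mul_qPoch_rpow_add_lt_sq (hq0 : 0 < q) (hq1 : q < 1) {b c : ℝ}
    (hc : 0 < c) (hcb : c < b) {n : ℕ} (hn : n ≠ 0) :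
    qPoch q (q ^ (b - c)) n * qPoch q (q ^ (b + c)) n < qPoch q (q ^ b) n ^ 2 := by
  have hsub : q ^ (b - c) < 1 := Real.rpow_lt_one hq0.le hq1 (by linarith)
  have hadd : q ^ (b + c) < 1 := Real.rpow_lt_one hq0.le hq1 (by linarith)
  have hne : q ^ (b - c) ≠ q ^ (b + c) :=
    (Real.rpow_lt_rpow_of_exponent_gt hq0 hq1 (by linarith)).ne'
  have hprod : q ^ (b - c) * q ^ (b + c) = (q ^ b) ^ 2 := by
    rw [← Real.rpow_add hq0, sq, ← Real.rpow_add hq0]; ring_nf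
  rw [qPoch, qPoch, qPoch, ← prod_mul_distrib, ← prod_pow]
  refine prod_lt_prod_of_nonempty (fun k _ => ?_) (fun k _ => ?_) (nonempty_range_iff.2 hn)
  · exact mul_pos (one_sub_mul_pow_pos hq0.le hq1.le hsub k)
      (one_sub_mul_pow_pos hq0.le hq1.le hadd k)
  · exact one_sub_mul_mul_one_sub_mul_lt_sq (by positivity) (by positivity) (by positivity) hne
      hprod (pow_pos hq0 k)

end QPochhammer

section QHypergeometric

variable {q x : ℝ} {r : ℕ} {a : Fin (r + 1) → ℝ} {b : Fin r → ℝ}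

noncomputable def qHypTerm (q : ℝ) (r : ℕ) (a : Fin (r + 1) → ℝ) (b : Fin r → ℝ) (x : ℝ)
    (n : ℕ) : ℝ :=
  (∏ j, qPoch q (q ^ a j) n) / ((∏ j, qPoch q (q ^ b j) n) * qPoch q q n) * x ^ n

lemma qHyp_eq_tsum_qHypTerm (b : Fin r → ℝ) : qHyp q r a b x = ∑' n, qHypTerm q r a b x n := rfl

lemma qHypTerm_zero : qHypTerm q r a b x 0 = 1 := by
  simp [qHypTerm, qPoch_zero]

lemma qHypTerm_succ (n : ℕ) :
    qHypTerm q r a b x (n + 1) = qHypTerm q r a b x n *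
      (x * (∏ j, (1 - q ^ a j * q ^ n)) / ((∏ j, (1 - q ^ b j * q ^ n)) * (1 - q * q ^ n))) := by
  simp only [qHypTerm, qPoch_succ, prod_mul_distrib, div_eq_mul_inv, mul_inv, pow_succ]
  ring

theorem summable_qHypTerm (hq : |q| < 1) (hx : |x| < 1) : Summable (qHypTerm q r a b x) := by
  set ratio : ℝ → ℝ := fun y =>
    x * (∏ j, (1 - q ^ a j * y)) / ((∏ j, (1 - q ^ b j * y)) * (1 - q * y))
  have hratio : Tendsto (fun n => ratio (q ^ n)) atTop (𝓝 x) := by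
    have hcont : ContinuousAt ratio 0 := by
      fun_prop (disch := simp)
    simpa [ratio, Function.comp_def] using
      hcont.tendsto.comp (tendsto_pow_atTop_nhds_zero_of_abs_lt_one hq)
  obtain ⟨ρ, hxρ, hρ1⟩ := exists_between hx
  refine summable_of_ratio_norm_eventually_le hρ1 ?_
  filter_upwards [hratio.norm.eventually (eventually_le_nhds hxρ)] with n hn
  rw [qHypTerm_succ, norm_mul, mul_comm]
  exact mul_le_mul_of_nonneg_right hn (norm_nonneg _)

lemma qHypTerm_pos (hq0 : 0 < q) (hq1 : q < 1) (ha : ∀ j, 0 < a j) (hb : ∀ i, 0 < b i)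
    (hx : 0 < x) (n : ℕ) : 0 < qHypTerm q r a b x n := by
  refine mul_pos (div_pos ?_ (mul_pos ?_ (qPoch_pos hq0.le hq1.le hq1 n))) (pow_pos hx n)
  · exact prod_pos fun j _ => qPoch_rpow_pos hq0 hq1 (ha j) n
  · exact prod_pos fun i _ => qPoch_rpow_pos hq0 hq1 (hb i) n

lemma qHypTerm_mul_qHypTerm (b' : Fin r → ℝ) (n : ℕ) :
    qHypTerm q r a b x n * qHypTerm q r a b' x n =
      ((∏ j, qPoch q (q ^ a j) n) * x ^ n / qPoch q q n) ^ 2 /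
        ((∏ i, qPoch q (q ^ b i) n) * ∏ i, qPoch q (q ^ b' i) n) := by
  simp only [qHypTerm]
  ring

lemma qHypTerm_sq_lt [Nonempty (Fin r)] {c : Fin r → ℝ} (hq0 : 0 < q) (hq1 : q < 1)
    (ha : ∀ j, 0 < a j) (hc : ∀ i, 0 < c i) (hcb : ∀ i, c i < b i) (hx : 0 < x) {n : ℕ}
    (hn : n ≠ 0) :
    qHypTerm q r a b x n ^ 2 <
      qHypTerm q r a (fun i => b i - c i) x n * qHypTerm q r a (fun i => b i + c i) x n := by
  rw [sq, qHypTerm_mul_qHypTerm, qHypTerm_mul_qHypTerm, ← prod_mul_distrib, ← prod_mul_distrib]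
  have hnum : 0 < (∏ j, qPoch q (q ^ a j) n) * x ^ n / qPoch q q n :=
    div_pos (mul_pos (prod_pos fun j _ => qPoch_rpow_pos hq0 hq1 (ha j) n) (pow_pos hx n))
      (qPoch_pos hq0.le hq1.le hq1 n)
  refine div_lt_div_of_pos_left (pow_pos hnum 2) (prod_pos fun i _ => ?_)
    (prod_lt_prod_of_nonempty (fun i _ => ?_) (fun i _ => ?_) univ_nonempty)
  · exact mul_pos (qPoch_rpow_pos hq0 hq1 (sub_pos.2 (hcb i)) n)
      (qPoch_rpow_pos hq0 hq1 (by linarith [hc i, hcb i]) n)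
  · exact mul_pos (qPoch_rpow_pos hq0 hq1 (sub_pos.2 (hcb i)) n)
      (qPoch_rpow_pos hq0 hq1 (by linarith [hc i, hcb i]) n)
  · rw [← sq]
    exact qPoch_rpow_sub_mul_qPoch_rpow_add_lt_sq hq0 hq1 (hc i) (hcb i) hn

lemma qHypTerm_sq_le [Nonempty (Fin r)] {c : Fin r → ℝ} (hq0 : 0 < q) (hq1 : q < 1)
    (ha : ∀ j, 0 < a j) (hc : ∀ i, 0 < c i) (hcb : ∀ i, c i < b i) (hx : 0 < x) (n : ℕ) :
    qHypTerm q r a b x n ^ 2 ≤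
      qHypTerm q r a (fun i => b i - c i) x n * qHypTerm q r a (fun i => b i + c i) x n := by
  rcases n with _ | n
  · simp [qHypTerm_zero]
  · exact (qHypTerm_sq_lt hq0 hq1 ha hc hcb hx n.succ_ne_zero).le

end QHypergeometric

theorem statement_3_general (r : ℕ) (hr : 1 ≤ r) (q : ℝ) (hq0 : 0 < q) (hq1 : q < 1)
    (a : Fin (r + 1) → ℝ) (b c : Fin r → ℝ)
    (ha : ∀ j, 0 < a j) (hbc : ∀ i, b i > c i) (hc : ∀ i, 0 < c i)
    (x : ℝ) (hx0 : 0 < x) (hx1 : x < 1) :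
    (qHyp q r a b x) ^ 2 <
      qHyp q r a (fun i => b i - c i) x * qHyp q r a (fun i => b i + c i) x := by
  have : Nonempty (Fin r) := ⟨⟨0, hr⟩⟩
  have hq : |q| < 1 := abs_lt.2 ⟨by linarith, hq1⟩
  have hx : |x| < 1 := abs_lt.2 ⟨by linarith, hx1⟩
  have hsub : ∀ i, 0 < b i - c i := fun i => sub_pos.2 (hbc i)
  have hadd : ∀ i, 0 < b i + c i := fun i => by linarith [hc i, hbc i]
  simp only [qHyp_eq_tsum_qHypTerm]
  exact tsum_sq_lt_tsum_mul_tsum (summable_qHypTerm hq hx) (summable_qHypTerm hq hx)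
    (fun n => (qHypTerm_pos hq0 hq1 ha hsub hx0 n).le)
    (fun n => (qHypTerm_pos hq0 hq1 ha hadd hx0 n).le)
    (qHypTerm_sq_le hq0 hq1 ha hc hbc hx0)
    ⟨1, qHypTerm_sq_lt hq0 hq1 ha hc hbc hx0 one_ne_zero⟩

theorem statement_3 (r : ℕ) (hr : 1 ≤ r) (q : ℝ) (hq0 : 0 < q) (hq1 : q < 1)
    (a : Fin (r + 1) → ℝ) (b c : Fin r → ℝ)
    (ha : ∀ j, 0 < a j) (hbc : ∀ i, b i > c i) (hc : ∀ i, 0 < c i) (hb1 : ∀ i, b i > 1)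
    (x : ℝ) (hx0 : 0 < x) (hx1 : x < 1) :
    (qHyp q r a b x) ^ 2 <
      qHyp q r a (fun i => b i - c i) x * qHyp q r a (fun i => b i + c i) x :=
  statement_3_general r hr q hq0 hq1 a b c ha hbc hc x hx0 hx1
end

section
/- Let (a_n)_{n≥0} and (b_n)_{n≥0} be real sequences such that the power series A(x) = Σ_{n=0}^∞ a_n x^n and B(x) = Σ_{n=0}^∞ b_n x^n converge for |x| < r, where r > 0. If b_n > 0 for all n and the sequence (a_n/b_n)_{n≥0} is decreasing, then the function x ↦ A(x)/B(x) is decreasing on [0,r); if moreover (a_n/b_n) is strictly decreasing, then A/B is strictly decreasing on [0,r). -/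
/-!
Summability in `ℝ` is absolute, so for `0 ≤ x ≤ y` the Cauchy product of the power series gives
`2 (A(x) B(y) - A(y) B(x)) = ∑_{m,n} (a_m b_n - a_n b_m) (x^m y^n - x^n y^m)`, and both factors of
each term have the sign of `n - m` (the first because `a_n / b_n` decreases), so the sum is
nonnegative; the `(0, 1)` term is positive when the ratios decrease strictly and `x < y`.
-/

open Set

lemma pow_mul_pow_le_pow_mul_pow {R : Type*} [CommSemiring R] [PartialOrder R] [IsOrderedRing R]
    {x y : R} (hx : 0 ≤ x) (hxy : x ≤ y) {m n : ℕ} (hmn : m ≤ n) :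
    x ^ n * y ^ m ≤ x ^ m * y ^ n := by
  obtain ⟨k, rfl⟩ := Nat.exists_eq_add_of_le hmn
  have hy : 0 ≤ y := hx.trans hxy
  calc x ^ (m + k) * y ^ m = x ^ m * (x ^ k * y ^ m) := by ring
    _ ≤ x ^ m * (y ^ k * y ^ m) := by gcongr
    _ = x ^ m * y ^ (m + k) := by ring

lemma hasSum_mul_of_summable {ι κ : Type*} {f : ι → ℝ} {g : κ → ℝ} (hf : Summable f)
    (hg : Summable g) :
    HasSum (fun p : ι × κ => f p.1 * g p.2) ((∑' i, f i) * ∑' j, g j) :=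
  hf.hasSum.mul hg.hasSum (summable_mul_of_summable_norm hf.norm hg.norm)

section CrossTerm

variable {a b : ℕ → ℝ} {x y : ℝ}

lemma hasSum_cross_term
    (hax : Summable fun n => a n * x ^ n) (hay : Summable fun n => a n * y ^ n)
    (hbx : Summable fun n => b n * x ^ n) (hby : Summable fun n => b n * y ^ n) :
    HasSum
      (fun p : ℕ × ℕ => (a p.1 * b p.2 - a p.2 * b p.1) * (x ^ p.1 * y ^ p.2 - x ^ p.2 * y ^ p.1))
      (2 * ((∑' n, a n * x ^ n) * (∑' n, b n * y ^ n)
        - (∑' n, a n * y ^ n) * (∑' n, b n * x ^ n))) := by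
  have hxy := hasSum_mul_of_summable hax hby
  have hyx := hasSum_mul_of_summable hay hbx
  have swap {f : ℕ × ℕ → ℝ} {s : ℝ} (h : HasSum f s) :
      HasSum (fun p : ℕ × ℕ => f p.swap) s :=
    (Equiv.prodComm ℕ ℕ).hasSum_iff.2 h
  rw [two_mul]
  refine ((hxy.sub hyx).add ((swap hxy).sub (swap hyx))).congr_fun fun p => ?_
  dsimp only [Prod.fst_swap, Prod.snd_swap]
  ring

lemma cross_term_nonneg (hab : Antitone fun n => a n / b n) (hb : ∀ n, 0 < b n)
    (hx : 0 ≤ x) (hxy : x ≤ y) (p : ℕ × ℕ) :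
    0 ≤ (a p.1 * b p.2 - a p.2 * b p.1) * (x ^ p.1 * y ^ p.2 - x ^ p.2 * y ^ p.1) := by
  obtain ⟨m, n⟩ := p
  wlog hmn : m ≤ n generalizing m n
  · convert this n m (le_of_not_ge hmn) using 1; ring
  exact mul_nonneg (sub_nonneg.2 ((div_le_div_iff₀ (hb n) (hb m)).1 (hab hmn)))
    (sub_nonneg.2 (pow_mul_pow_le_pow_mul_pow hx hxy hmn))

end CrossTerm

section Ratio

variable {a b : ℕ → ℝ} {x y : ℝ}
  (hax : Summable fun n => a n * x ^ n) (hay : Summable fun n => a n * y ^ n)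
  (hbx : Summable fun n => b n * x ^ n) (hby : Summable fun n => b n * y ^ n)
include hax hay hbx hby

lemma tsum_mul_tsum_le_of_antitone (hab : Antitone fun n => a n / b n) (hb : ∀ n, 0 < b n)
    (hx : 0 ≤ x) (hxy : x ≤ y) :
    (∑' n, a n * y ^ n) * (∑' n, b n * x ^ n) ≤
      (∑' n, a n * x ^ n) * (∑' n, b n * y ^ n) := by
  have := hasSum_le (cross_term_nonneg hab hb hx hxy) hasSum_zero
    (hasSum_cross_term hax hay hbx hby)
  linarith

lemma tsum_mul_tsum_lt_of_strictAnti (hab : StrictAnti fun n => a n / b n) (hb : ∀ n, 0 < b n)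
    (hx : 0 ≤ x) (hxy : x < y) :
    (∑' n, a n * y ^ n) * (∑' n, b n * x ^ n) <
      (∑' n, a n * x ^ n) * (∑' n, b n * y ^ n) := by
  have h01 : 0 < (a 0 * b 1 - a 1 * b 0) * (x ^ 0 * y ^ 1 - x ^ 1 * y ^ 0) := by
    have := (div_lt_div_iff₀ (hb 1) (hb 0)).1 (hab Nat.zero_lt_one)
    simp only [pow_zero, pow_one, one_mul, mul_one]
    exact mul_pos (sub_pos.2 this) (sub_pos.2 hxy)
  have := hasSum_lt (i := (0, 1)) (cross_term_nonneg hab.antitone hb hx hxy.le) h01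
    hasSum_zero (hasSum_cross_term hax hay hbx hby)
  linarith

end Ratio

theorem statement_6_general (a b : ℕ → ℝ) (r : ℝ)
    (hA : ∀ x : ℝ, |x| < r → Summable (fun n => a n * x ^ n))
    (hB : ∀ x : ℝ, |x| < r → Summable (fun n => b n * x ^ n))
    (hb : ∀ n, 0 < b n) :
    (Antitone (fun n => a n / b n) →
      AntitoneOn (fun x : ℝ => (∑' n : ℕ, a n * x ^ n) / (∑' n : ℕ, b n * x ^ n))
        (Set.Ico 0 r)) ∧
    (StrictAnti (fun n => a n / b n) →
      StrictAntiOn (fun x : ℝ => (∑' n : ℕ, a n * x ^ n) / (∑' n : ℕ, b n * x ^ n))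
        (Set.Ico 0 r)) := by
  have habs {x : ℝ} (hx : x ∈ Ico 0 r) : |x| < r := by rw [abs_of_nonneg hx.1]; exact hx.2
  have hBpos {x : ℝ} (hx : x ∈ Ico 0 r) : 0 < ∑' n, b n * x ^ n :=
    (hB x (habs hx)).tsum_pos (fun n => mul_nonneg (hb n).le (pow_nonneg hx.1 n)) 0
      (by simpa using hb 0)
  refine ⟨fun hab x hx y hy hxy => ?_, fun hab x hx y hy hxy => ?_⟩
  · rw [div_le_div_iff₀ (hBpos hy) (hBpos hx)]
    exact tsum_mul_tsum_le_of_antitone (hA x (habs hx)) (hA y (habs hy)) (hB x (habs hx))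
      (hB y (habs hy)) hab hb hx.1 hxy
  · rw [div_lt_div_iff₀ (hBpos hy) (hBpos hx)]
    exact tsum_mul_tsum_lt_of_strictAnti (hA x (habs hx)) (hA y (habs hy)) (hB x (habs hx))
      (hB y (habs hy)) hab hb hx.1 hxy

theorem statement_6 (a b : ℕ → ℝ) (r : ℝ) (hr : 0 < r)
    (hA : ∀ x : ℝ, |x| < r → Summable (fun n => a n * x ^ n))
    (hB : ∀ x : ℝ, |x| < r → Summable (fun n => b n * x ^ n))
    (hb : ∀ n, 0 < b n) :
    (Antitone (fun n => a n / b n) →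
      AntitoneOn (fun x : ℝ => (∑' n : ℕ, a n * x ^ n) / (∑' n : ℕ, b n * x ^ n))
        (Set.Ico 0 r)) ∧
    (StrictAnti (fun n => a n / b n) →
      StrictAntiOn (fun x : ℝ => (∑' n : ℕ, a n * x ^ n) / (∑' n : ℕ, b n * x ^ n))
        (Set.Ico 0 r)) :=
  statement_6_general a b r hA hB hb
end

section
/- For every n ∈ ℕ, n ≥ 1, the function g_n(x) = ₁F₁(1; n+1; x)·₁F₁(1; n+3; x) / [₁F₁(1; n+2; x)]² is monotone increasing on [0,∞). -/
/-- The ascending factorial (Pochhammer symbol) `(a)_n = a(a+1)⋯(a+n-1)`. -/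
noncomputable def ascPoch (a : ℝ) (n : ℕ) : ℝ :=
  ∏ k ∈ Finset.range n, (a + k)

/-- The Kummer confluent hypergeometric function
`₁F₁(a;b;x) = Σ_{n=0}^∞ (a)_n/((b)_n n!) x^n`. -/
noncomputable def kummer (a b x : ℝ) : ℝ :=
  ∑' n : ℕ, ascPoch a n / (ascPoch b n * n.factorial) * x ^ n


/-!
Write `F m x = ₁F₁(1; m+1; x) = ∑ₖ m! xᵏ / (m+k)!` and `n = p + 1`. Since
`m! (eˣ - ∑_{i<m} xⁱ/i!) = xᵐ F m x` and the bracket differentiates to the same bracket with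
`m - 1`, one gets `x F'(m+1) = (m+1) (F m - F (m+1))`. Hence for `x > 0` the derivative of
`F (p+1) F (p+3) / F (p+2)²` is `T / (x F (p+2)³)`, where the contiguous relation
`(m+1) F m = (m+1) + x F (m+1)` reduces the cubic `T` to the quadratic form
`(p+1) F(p+2) F(p+3) + (p+3) F(p+1) F(p+2) - 2(p+2) F(p+1) F(p+3)`.
By the Cauchy product, its Taylor coefficients are positive multiples of the binomial sums
`turanCoeff p k`, which are nonnegative by induction on `k`: `turanCoeff p (k+1)` exceeds
`2 turanCoeff p k` because every term of a window of binomial coefficients lying in the middle of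
a row is at least the window's first term. Continuity at `0` follows from `1 ≤ F m x ≤ eˣ`.
-/

open Finset Filter Topology
open scoped Nat

lemma choose_le_choose_of_le_of_le_half {n a b : ℕ} (hab : a ≤ b) (hb : b ≤ n / 2) :
    n.choose a ≤ n.choose b := by
  induction b, hab using Nat.le_induction with
  | base => rfl
  | succ b _ ih => exact (ih (by omega)).trans (Nat.choose_le_succ_of_lt_half_left (by omega))

lemma choose_le_choose_of_le_of_le_sub {n a b : ℕ} (hab : a ≤ b) (hb : b ≤ n - a) :
    n.choose a ≤ n.choose b := by
  rcases le_or_gt b (n / 2) with h | h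
  · exact choose_le_choose_of_le_of_le_half hab h
  · rw [← Nat.choose_symm (by omega : b ≤ n)]
    exact choose_le_choose_of_le_of_le_half (by omega) (by omega)

def chooseWindow (n a k : ℕ) : ℕ := ∑ i ∈ range k, n.choose (a + i)

lemma chooseWindow_succ (n a k : ℕ) :
    chooseWindow n a (k + 1) = n.choose a + chooseWindow n (a + 1) k := by
  simp only [chooseWindow, sum_range_succ', add_zero, add_comm, ← add_assoc]

lemma mul_choose_le_chooseWindow {n a k : ℕ} (h : 2 * a + k ≤ n + 1) :
    k * n.choose a ≤ chooseWindow n a k := by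
  simpa [chooseWindow] using sum_le_sum fun i (hi : i ∈ range k) =>
    choose_le_choose_of_le_of_le_sub (n := n) (a := a) (b := a + i) (by omega)
      (by have := mem_range.1 hi; omega)

lemma chooseWindow_add_choose (n a k : ℕ) :
    chooseWindow n a k + n.choose (a + k) = n.choose a + chooseWindow n (a + 1) k := by
  rw [← chooseWindow_succ]
  exact (sum_range_succ _ _).symm

lemma chooseWindow_succ_succ (n a k : ℕ) :
    chooseWindow (n + 1) (a + 1) k = chooseWindow n a k + chooseWindow n (a + 1) k := by
  simp only [chooseWindow, ← sum_add_distrib, add_right_comm a 1, Nat.choose_succ_succ']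

lemma cast_choose_succ_right_mul {n k : ℕ} (h : k ≤ n) :
    (n.choose (k + 1) : ℝ) * (k + 1) = n.choose k * ((n : ℝ) - k) := by
  rw [← Nat.cast_sub h]
  exact_mod_cast Nat.choose_succ_right_eq n k

-- Up to a positive factor, the `k`-th Taylor coefficient of the form in
-- `kummerOne_quadratic_nonneg`.
noncomputable def turanCoeff (p k : ℕ) : ℝ :=
  ((k * (k + 1) : ℝ) - 6 * (p + 2)) * chooseWindow (2 * p + k + 3) (p + 1) (k + 1)
    + (p + 2) * (3 * p + 2 * k + 9)
      * (((2 * p + k + 3).choose (p + 2) : ℝ) - (2 * p + k + 3).choose (p + k + 3))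

lemma cast_choose_window_edges (p k : ℕ) :
    ((2 * p + k + 3).choose (p + k + 2) : ℝ) = (2 * p + k + 3).choose (p + 1)
    ∧ ((2 * p + k + 3).choose (p + 2) : ℝ) = (p + k + 2) / (p + 2) * (2 * p + k + 3).choose (p + 1)
    ∧ ((2 * p + k + 3).choose (p + k + 3) : ℝ) =
      (p + 1) / (p + k + 3) * (2 * p + k + 3).choose (p + 1) := by
  have symm : ((2 * p + k + 3).choose (p + k + 2) : ℝ) = (2 * p + k + 3).choose (p + 1) := by
    exact_mod_cast Nat.choose_symm_of_eq_add (by ring)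
  have h2 := cast_choose_succ_right_mul (n := 2 * p + k + 3) (k := p + 1) (by omega)
  have h3 := cast_choose_succ_right_mul (n := 2 * p + k + 3) (k := p + k + 2) (by omega)
  push_cast at h2 h3
  rw [symm] at h3
  refine ⟨symm, ?_, ?_⟩ <;> field_simp <;> linarith

lemma turanCoeff_zero (p : ℕ) : turanCoeff p 0 = 0 := by
  obtain ⟨-, h2, h3⟩ := cast_choose_window_edges p 0
  simp only [turanCoeff, chooseWindow, Nat.cast_zero, zero_add, add_zero, range_one,
    sum_singleton] at h2 h3 ⊢
  rw [h2, h3]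
  field_simp
  ring

lemma turanCoeff_succ (p k : ℕ) :
    turanCoeff p (k + 1) = 2 * turanCoeff p k
      + 4 * (k + 1) * (chooseWindow (2 * p + k + 3) (p + 1) (k + 1)
        - (k + 1) * (2 * p + k + 3).choose (p + 1))
      + (k + 1) * (k + 2) * ((3 * k + 4) * (k + 3) + 4 * (p + 1) * (k + 2))
        / ((p + k + 3) * (p + k + 4)) * (2 * p + k + 3).choose (p + 1) := by
  obtain ⟨h1, h2, h3⟩ := cast_choose_window_edges p k
  have h4 := cast_choose_succ_right_mul (n := 2 * p + k + 3) (k := p + k + 3) (by omega)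
  have window : (chooseWindow (2 * p + k + 4) (p + 1) (k + 2) : ℝ)
      = 2 * chooseWindow (2 * p + k + 3) (p + 1) (k + 1) + (2 * p + k + 3).choose (p + k + 2)
        + (2 * p + k + 3).choose (p + k + 3) := by
    have pascal := chooseWindow_succ_succ (2 * p + k + 3) p (k + 2)
    have first := chooseWindow_succ (2 * p + k + 3) p (k + 1)
    have last : chooseWindow (2 * p + k + 3) (p + 1) (k + 2)
        = chooseWindow (2 * p + k + 3) (p + 1) (k + 1) + (2 * p + k + 3).choose (p + k + 2) := by
      rw [chooseWindow, sum_range_succ, ← chooseWindow, show p + 1 + (k + 1) = p + k + 2 by ring]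
    have symm : (2 * p + k + 3).choose p = (2 * p + k + 3).choose (p + k + 3) :=
      Nat.choose_symm_of_eq_add (by ring)
    rw [show 2 * p + k + 3 + 1 = 2 * p + k + 4 by ring] at pascal
    rw [show k + 1 + 1 = k + 2 by ring] at first
    have : chooseWindow (2 * p + k + 4) (p + 1) (k + 2)
        = 2 * chooseWindow (2 * p + k + 3) (p + 1) (k + 1) + (2 * p + k + 3).choose (p + k + 2)
          + (2 * p + k + 3).choose (p + k + 3) := by
      omega
    exact_mod_cast this
  have pascal_left : ((2 * p + k + 4).choose (p + 2) : ℝ)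
      = (2 * p + k + 3).choose (p + 1) + (2 * p + k + 3).choose (p + 2) := by
    exact_mod_cast Nat.choose_succ_succ' (2 * p + k + 3) (p + 1)
  have pascal_right : ((2 * p + k + 4).choose (p + k + 4) : ℝ)
      = (2 * p + k + 3).choose (p + k + 3) + (2 * p + k + 3).choose (p + k + 4) := by
    exact_mod_cast Nat.choose_succ_succ' (2 * p + k + 3) (p + k + 3)
  have h4' : ((2 * p + k + 3).choose (p + k + 4) : ℝ)
      = p / (p + k + 4) * (2 * p + k + 3).choose (p + k + 3) := by
    push_cast at h4; field_simp; linarith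
  rw [turanCoeff, turanCoeff, show 2 * p + (k + 1) + 3 = 2 * p + k + 4 by ring,
    show p + (k + 1) + 3 = p + k + 4 by ring, window, pascal_left, pascal_right, h4', h1, h2, h3]
  push_cast
  field_simp
  ring

lemma turanCoeff_nonneg (p k : ℕ) : 0 ≤ turanCoeff p k := by
  induction k with
  | zero => rw [turanCoeff_zero]
  | succ k ih =>
    have window : ((k + 1) * (2 * p + k + 3).choose (p + 1) : ℝ)
        ≤ chooseWindow (2 * p + k + 3) (p + 1) (k + 1) := by
      exact_mod_cast mul_choose_le_chooseWindow (by omega)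
    rw [turanCoeff_succ]
    have := sub_nonneg.2 window
    positivity

lemma cast_chooseWindow_next_rows (p k : ℕ) :
    (chooseWindow (2 * p + k + 4) (p + 1) (k + 1) : ℝ)
      = 2 * chooseWindow (2 * p + k + 3) (p + 1) (k + 1) + (2 * p + k + 3).choose (p + k + 3)
        - (2 * p + k + 3).choose (p + 2)
    ∧ (chooseWindow (2 * p + k + 5) (p + 2) (k + 1) : ℝ)
      = 4 * chooseWindow (2 * p + k + 3) (p + 1) (k + 1) + (2 * p + k + 3).choose (p + k + 3)
        - (2 * p + k + 3).choose (p + 2) := by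
  have pascal3 := chooseWindow_succ_succ (2 * p + k + 3) p (k + 1)
  have shift3 := chooseWindow_add_choose (2 * p + k + 3) p (k + 1)
  have pascal1 := chooseWindow_succ_succ (2 * p + k + 4) (p + 1) (k + 1)
  have shift1 := chooseWindow_add_choose (2 * p + k + 4) (p + 1) (k + 1)
  rw [show 2 * p + k + 3 + 1 = 2 * p + k + 4 by ring] at pascal3
  rw [show 2 * p + k + 4 + 1 = 2 * p + k + 5 by ring, show p + 1 + 1 = p + 2 by ring] at pascal1
  rw [show p + (k + 1) = p + k + 1 by ring] at shift3
  rw [show p + 1 + (k + 1) = p + k + 2 by ring, show p + 1 + 1 = p + 2 by ring,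
    Nat.choose_symm_of_eq_add (show 2 * p + k + 4 = p + k + 2 + (p + 2) by ring)] at shift1
  have pascal_left : (2 * p + k + 4).choose (p + 2)
      = (2 * p + k + 3).choose (p + 1) + (2 * p + k + 3).choose (p + 2) :=
    Nat.choose_succ_succ' _ _
  have pascal_right : (2 * p + k + 4).choose (p + 1)
      = (2 * p + k + 3).choose p + (2 * p + k + 3).choose (p + 1) :=
    Nat.choose_succ_succ' _ _
  have s1 : (2 * p + k + 3).choose (p + k + 1) = (2 * p + k + 3).choose (p + 2) :=
    Nat.choose_symm_of_eq_add (by ring)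
  have s2 : (2 * p + k + 3).choose p = (2 * p + k + 3).choose (p + k + 3) :=
    Nat.choose_symm_of_eq_add (by ring)
  have w3 : chooseWindow (2 * p + k + 4) (p + 1) (k + 1) + (2 * p + k + 3).choose (p + 2)
      = 2 * chooseWindow (2 * p + k + 3) (p + 1) (k + 1) + (2 * p + k + 3).choose (p + k + 3) := by
    omega
  have w1 : chooseWindow (2 * p + k + 5) (p + 2) (k + 1) + (2 * p + k + 3).choose (p + 2)
      = 4 * chooseWindow (2 * p + k + 3) (p + 1) (k + 1) + (2 * p + k + 3).choose (p + k + 3) := by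
    omega
  exact ⟨by rw [eq_sub_iff_add_eq]; exact_mod_cast w3, by rw [eq_sub_iff_add_eq]; exact_mod_cast w1⟩

lemma window_combination_eq_turanCoeff (p k : ℕ) :
    (p + 1) * ((p + 2)! * (p + 3)! / (2 * p + k + 5)!
        * chooseWindow (2 * p + k + 5) (p + 2) (k + 1))
      + (p + 3) * ((p + 1)! * (p + 2)! / (2 * p + k + 3)!
        * chooseWindow (2 * p + k + 3) (p + 1) (k + 1))
      - 2 * (p + 2) * ((p + 1)! * (p + 3)! / (2 * p + k + 4)!
        * chooseWindow (2 * p + k + 4) (p + 1) (k + 1))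
      = (p + 3) * (p + 1)! * (p + 2)! / (2 * p + k + 5)! * turanCoeff p k := by
  obtain ⟨w3, w1⟩ := cast_chooseWindow_next_rows p k
  rw [w1, w3, turanCoeff]
  simp only [Nat.factorial_succ, show 2 * p + k + 5 = 2 * p + k + 3 + 1 + 1 by ring,
    show 2 * p + k + 4 = 2 * p + k + 3 + 1 by ring]
  push_cast
  field_simp
  ring

noncomputable def kummerOne (m : ℕ) (x : ℝ) : ℝ := ∑' k : ℕ, x ^ k * ((m ! : ℝ) / (m + k)!)

lemma ascPoch_succ (a : ℝ) (n : ℕ) : ascPoch a (n + 1) = ascPoch a n * (a + n) :=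
  prod_range_succ _ _

lemma ascPoch_one (k : ℕ) : ascPoch 1 k = k ! := by
  induction k with
  | zero => simp [ascPoch]
  | succ k ih => rw [ascPoch_succ, ih, Nat.factorial_succ]; push_cast; ring

lemma ascPoch_natCast_add_one_mul_factorial (m k : ℕ) : ascPoch (m + 1) k * m ! = (m + k)! := by
  induction k with
  | zero => simp [ascPoch]
  | succ k ih =>
    rw [ascPoch_succ, mul_right_comm, ih, ← add_assoc, Nat.factorial_succ]
    push_cast
    ring

lemma kummer_one_eq_kummerOne {b : ℝ} {m : ℕ} (hb : b = m + 1) : kummer 1 b = kummerOne m := by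
  subst hb
  funext x
  refine tsum_congr fun k => ?_
  have h := ascPoch_natCast_add_one_mul_factorial m k
  rw [ascPoch_one, ← h]
  field_simp

lemma factorial_div_factorial_add_le (m k : ℕ) : (m ! : ℝ) / (m + k)! ≤ 1 / k ! := by
  rw [div_le_div_iff₀ (by positivity) (by positivity), one_mul]
  exact_mod_cast Nat.le_of_dvd (Nat.factorial_pos _)
    (Nat.factorial_mul_factorial_dvd_factorial_add m k)

lemma summable_norm_kummerOne (m : ℕ) (x : ℝ) :
    Summable fun k : ℕ => ‖x ^ k * ((m ! : ℝ) / (m + k)!)‖ := by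
  refine (Real.summable_pow_div_factorial |x|).of_nonneg_of_le (fun _ => norm_nonneg _) fun k => ?_
  rw [norm_mul, norm_pow, Real.norm_eq_abs, Real.norm_of_nonneg (by positivity),
    div_eq_mul_one_div (|x| ^ k)]
  exact mul_le_mul_of_nonneg_left (factorial_div_factorial_add_le m k) (by positivity)

lemma hasSum_kummerOne (m : ℕ) (x : ℝ) :
    HasSum (fun k : ℕ => x ^ k * ((m ! : ℝ) / (m + k)!)) (kummerOne m x) :=
  (summable_norm_kummerOne m x).of_norm.hasSum

lemma kummerOne_zero_right (m : ℕ) : kummerOne m 0 = 1 := by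
  rw [kummerOne, tsum_eq_single 0 fun k hk => by simp [hk]]
  simp [Nat.factorial_ne_zero]

lemma one_le_kummerOne (m : ℕ) {x : ℝ} (hx : 0 ≤ x) : 1 ≤ kummerOne m x := by
  simpa [kummerOne, Nat.factorial_ne_zero] using
    (hasSum_kummerOne m x).summable.le_tsum 0 fun k _ => by positivity

lemma kummerOne_pos (m : ℕ) {x : ℝ} (hx : 0 ≤ x) : 0 < kummerOne m x :=
  zero_lt_one.trans_le (one_le_kummerOne m hx)

lemma kummerOne_le_exp (m : ℕ) {x : ℝ} (hx : 0 ≤ x) : kummerOne m x ≤ Real.exp x := by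
  rw [Real.exp_eq_exp_ℝ]
  refine hasSum_le (fun k => ?_) (hasSum_kummerOne m x) (NormedSpace.expSeries_div_hasSum_exp x)
  rw [div_eq_mul_one_div (x ^ k)]
  exact mul_le_mul_of_nonneg_left (factorial_div_factorial_add_le m k) (by positivity)

lemma kummerOne_recurrence (m : ℕ) (x : ℝ) :
    (m + 1) * kummerOne m x = (m + 1) + x * kummerOne (m + 1) x := by
  have h := ((hasSum_kummerOne m x).mul_left (m + 1 : ℝ))
  rw [← hasSum_nat_add_iff' 1] at h
  have h' : HasSum (fun k : ℕ => (m + 1 : ℝ) * (x ^ (k + 1) * ((m ! : ℝ) / (m + (k + 1))!)))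
      (x * kummerOne (m + 1) x) := by
    refine ((hasSum_kummerOne (m + 1) x).mul_left x).congr_fun fun k => ?_
    rw [Nat.factorial_succ, add_right_comm m 1 k, ← add_assoc]
    push_cast
    field_simp
    ring
  have := h.unique h'
  simp [Nat.factorial_ne_zero] at this
  linarith

noncomputable def expTail (m : ℕ) (x : ℝ) : ℝ := Real.exp x - ∑ i ∈ range m, x ^ i / i !

lemma factorial_mul_expTail (m : ℕ) (x : ℝ) : m ! * expTail m x = x ^ m * kummerOne m x := by
  have h := (hasSum_nat_add_iff' m).2 (Real.exp_eq_exp_ℝ ▸ NormedSpace.expSeries_div_hasSum_exp x)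
  refine ((h.mul_left (m ! : ℝ)).unique ?_)
  convert (hasSum_kummerOne m x).mul_left (x ^ m) using 1
  ext k
  rw [pow_add, add_comm k m]
  field_simp

lemma hasDerivAt_expTail (m : ℕ) (x : ℝ) : HasDerivAt (expTail (m + 1)) (expTail m x) x := by
  refine ((Real.hasDerivAt_exp x).sub (HasDerivAt.fun_sum fun i (_ : i ∈ range (m + 1)) =>
    (hasDerivAt_pow i x).div_const (i ! : ℝ))).congr_deriv ?_
  rw [expTail, sum_range_succ']
  simp only [Nat.cast_zero, zero_mul, zero_div, add_zero, add_tsub_cancel_right]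
  congr 1
  refine sum_congr rfl fun i _ => ?_
  rw [Nat.factorial_succ]
  push_cast
  field_simp

lemma hasDerivAt_kummerOne (m : ℕ) {x : ℝ} (hx : x ≠ 0) :
    HasDerivAt (kummerOne (m + 1)) ((m + 1) * (kummerOne m x - kummerOne (m + 1) x) / x) x := by
  have closed_form :
      ∀ y ≠ (0 : ℝ), (m + 1)! * expTail (m + 1) y / y ^ (m + 1) = kummerOne (m + 1) y :=
    fun y hy => by rw [factorial_mul_expTail]; field_simp
  have h := ((hasDerivAt_expTail m x).const_mul ((m + 1)! : ℝ)).div (hasDerivAt_pow (m + 1) x)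
    (pow_ne_zero _ hx)
  have near_x : (fun y => (m + 1)! * expTail (m + 1) y / y ^ (m + 1)) =ᶠ[𝓝 x] kummerOne (m + 1) :=
    (eventually_ne_nhds hx).mono closed_form
  refine (h.congr_of_eventuallyEq near_x.symm).congr_deriv ?_
  have e0 := factorial_mul_expTail m x
  have e1 := factorial_mul_expTail (m + 1) x
  rw [Nat.factorial_succ] at e1 ⊢
  push_cast at e1 ⊢
  field_simp
  linear_combination x ^ (m + 2) * e0 - x ^ (m + 1) * e1

lemma hasSum_kummerOne_mul (a b : ℕ) (x : ℝ) :
    HasSum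
      (fun k : ℕ => x ^ k * ((a ! * b ! : ℝ) / (a + b + k)! * chooseWindow (a + b + k) a (k + 1)))
      (kummerOne a x * kummerOne b x) := by
  refine (hasSum_sum_range_mul_of_summable_norm (summable_norm_kummerOne a x)
    (summable_norm_kummerOne b x)).congr_fun fun k => ?_
  rw [chooseWindow]
  push_cast
  rw [mul_sum, mul_sum]
  refine sum_congr rfl fun i hi => ?_
  have hik : i ≤ k := Nat.lt_succ_iff.mp (mem_range.mp hi)
  have factorials :
      ((a + b + k).choose (a + i) : ℝ) * (a + i)! * (b + (k - i))! = (a + b + k)! := by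
    have h := Nat.add_choose_mul_factorial_mul_factorial (a + i) (b + (k - i))
    rw [← Nat.choose_symm_add, show a + i + (b + (k - i)) = a + b + k by omega] at h
    exact_mod_cast h
  have choose_ne_zero : ((a + b + k).choose (a + i) : ℝ) ≠ 0 :=
    Nat.cast_ne_zero.2 (Nat.choose_pos (by omega)).ne'
  rw [← factorials, ← pow_mul_pow_sub x hik]
  field_simp

lemma kummerOne_quadratic_nonneg (p : ℕ) {x : ℝ} (hx : 0 ≤ x) :
    0 ≤ (p + 1) * (kummerOne (p + 2) x * kummerOne (p + 3) x)
      + (p + 3) * (kummerOne (p + 1) x * kummerOne (p + 2) x)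
      - 2 * (p + 2) * (kummerOne (p + 1) x * kummerOne (p + 3) x) := by
  have h := (((hasSum_kummerOne_mul (p + 2) (p + 3) x).mul_left (p + 1 : ℝ)).add
    ((hasSum_kummerOne_mul (p + 1) (p + 2) x).mul_left (p + 3 : ℝ))).sub
    ((hasSum_kummerOne_mul (p + 1) (p + 3) x).mul_left (2 * (p + 2) : ℝ))
  refine h.nonneg fun k => ?_
  have coeff := window_combination_eq_turanCoeff p k
  have := turanCoeff_nonneg p k
  rw [show p + 2 + (p + 3) + k = 2 * p + k + 5 by ring,
    show p + 1 + (p + 2) + k = 2 * p + k + 3 by ring,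
    show p + 1 + (p + 3) + k = 2 * p + k + 4 by ring]
  calc (0 : ℝ) ≤ x ^ k * ((p + 3) * (p + 1)! * (p + 2)! / (2 * p + k + 5)! * turanCoeff p k) := by
        positivity
    _ = _ := by rw [← coeff]; ring

noncomputable def turanCubic (p : ℕ) (x : ℝ) : ℝ :=
  (p + 1) * kummerOne p x * kummerOne (p + 2) x * kummerOne (p + 3) x
    + (p + 3) * kummerOne (p + 1) x * kummerOne (p + 2) x ^ 2
    - 2 * (p + 2) * kummerOne (p + 1) x ^ 2 * kummerOne (p + 3) x

lemma turanCubic_nonneg (p : ℕ) {x : ℝ} (hx : 0 ≤ x) : 0 ≤ turanCubic p x := by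
  rw [turanCubic]
  have r0 := kummerOne_recurrence p x
  have r1 := kummerOne_recurrence (p + 1) x
  have r2 := kummerOne_recurrence (p + 2) x
  rw [show p + 1 + 1 = p + 2 by ring] at r1
  rw [show p + 2 + 1 = p + 3 by ring] at r2
  push_cast at r1 r2
  linear_combination kummerOne_quadratic_nonneg p hx
    - kummerOne (p + 2) x * kummerOne (p + 3) x * r0
    + 2 * kummerOne (p + 1) x * kummerOne (p + 3) x * r1
    - kummerOne (p + 1) x * kummerOne (p + 2) x * r2

lemma hasDerivAt_kummerOne_ratio (p : ℕ) {x : ℝ} (hx : 0 < x) :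
    HasDerivAt (fun y => kummerOne (p + 1) y * kummerOne (p + 3) y / kummerOne (p + 2) y ^ 2)
      (turanCubic p x / (x * kummerOne (p + 2) x ^ 3)) x := by
  have h1 := hasDerivAt_kummerOne p hx.ne'
  have h2 := hasDerivAt_kummerOne (p + 1) hx.ne'
  have h3 := hasDerivAt_kummerOne (p + 2) hx.ne'
  rw [show p + 1 + 1 = p + 2 by ring] at h2
  rw [show p + 2 + 1 = p + 3 by ring] at h3
  have hF := (kummerOne_pos (p + 2) hx.le).ne'
  refine ((h1.mul h3).div (h2.pow 2) (pow_ne_zero 2 hF)).congr_deriv ?_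
  rw [turanCubic]
  simp only [Pi.mul_apply, Pi.pow_apply]
  push_cast
  field_simp
  ring

lemma continuousOn_kummerOne (m : ℕ) : ContinuousOn (kummerOne (m + 1)) (Set.Ici 0) := by
  intro x hx
  rcases (Set.mem_Ici.1 hx).eq_or_lt with rfl | hpos
  · have hexp : Tendsto Real.exp (𝓝[Set.Ici 0] 0) (𝓝 1) := by
      simpa using (Real.continuous_exp.tendsto 0).mono_left nhdsWithin_le_nhds
    rw [ContinuousWithinAt, kummerOne_zero_right]
    exact tendsto_of_tendsto_of_tendsto_of_le_of_le' tendsto_const_nhds hexp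
      (eventually_nhdsWithin_of_forall fun y hy => one_le_kummerOne _ hy)
      (eventually_nhdsWithin_of_forall fun y hy => kummerOne_le_exp _ hy)
  · exact (hasDerivAt_kummerOne m hpos.ne').continuousAt.continuousWithinAt

theorem statement_13 (n : ℕ) (hn : 1 ≤ n) :
    MonotoneOn
      (fun x : ℝ =>
        kummer 1 (n + 1) x * kummer 1 (n + 3) x / (kummer 1 (n + 2) x) ^ 2)
      (Set.Ici (0 : ℝ)) := by
  obtain ⟨p, rfl⟩ := Nat.exists_eq_add_of_le' hn
  rw [kummer_one_eq_kummerOne (m := p + 1) (by push_cast; ring),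
    kummer_one_eq_kummerOne (m := p + 3) (by push_cast; ring),
    kummer_one_eq_kummerOne (m := p + 2) (by push_cast; ring)]
  refine monotoneOn_of_hasDerivWithinAt_nonneg (convex_Ici 0)
    (((continuousOn_kummerOne p).mul (continuousOn_kummerOne (p + 2))).div
      ((continuousOn_kummerOne (p + 1)).pow 2) fun x hx => pow_ne_zero 2 (kummerOne_pos _ hx).ne')
    (fun x hx => (hasDerivAt_kummerOne_ratio p (interior_Ici.subset hx)).hasDerivWithinAt)
    fun x hx => ?_
  rw [interior_Ici, Set.mem_Ioi] at hx
  have := kummerOne_pos (p + 2) hx.le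
  exact div_nonneg (turanCubic_nonneg p hx.le) (by positivity)
end

section
/- Let a, b, c be real numbers with a > 0 and b > c > 0. Then for all x ≥ 0 the Turán type inequality [₁F₁(a; b; x)]² ≤ ₁F₁(a; b−c; x)·₁F₁(a; b+c; x) holds. -/
theorem tsum_sq_le_tsum_mul_tsum_of_sq_le_mul {ι : Type*} {u v w : ι → ℝ}
    (hv : ∀ i, 0 ≤ v i) (hw : ∀ i, 0 ≤ w i) (h : ∀ i, u i ^ 2 ≤ v i * w i)
    (hvs : Summable v) (hws : Summable w) :
    (∑' i, u i) ^ 2 ≤ (∑' i, v i) * ∑' i, w i := by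
  have hus : Summable u := by
    refine (hvs.add hws).of_norm_bounded fun i => ?_
    have h2 := two_mul_le_add_of_sq_le_mul (hv i) (hw i) (r := ‖u i‖) (by simpa using h i)
    linarith [norm_nonneg (u i)]
  refine le_of_tendsto_of_tendsto' (hus.hasSum.pow 2) (Filter.Tendsto.mul hvs.hasSum hws.hasSum) fun s => ?_
  exact Finset.sum_sq_le_sum_mul_sum_of_sq_le_mul s (fun i _ => hv i) (fun i _ => hw i)
    fun i _ => h i

namespace ascPoch

theorem succ (a : ℝ) (n : ℕ) : ascPoch a (n + 1) = ascPoch a n * (a + n) :=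
  Finset.prod_range_succ _ _

theorem nonneg {a : ℝ} (ha : 0 ≤ a) (n : ℕ) : 0 ≤ ascPoch a n :=
  Finset.prod_nonneg fun _ _ => by positivity

theorem pos {a : ℝ} (ha : 0 < a) (n : ℕ) : 0 < ascPoch a n :=
  Finset.prod_pos fun _ _ => by positivity

theorem sub_mul_add_le_sq {b c : ℝ} (hbc : 0 ≤ b - c) (hcb : 0 ≤ b + c) (n : ℕ) :
    ascPoch (b - c) n * ascPoch (b + c) n ≤ ascPoch b n ^ 2 := by
  rw [ascPoch, ascPoch, ascPoch, ← Finset.prod_mul_distrib, ← Finset.prod_pow]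
  refine Finset.prod_le_prod (fun k _ => by positivity) fun k _ => ?_
  nlinarith [sq_nonneg c]

end ascPoch

/-- The `n`-th term of the series defining `kummer a b x`. -/
noncomputable def kummerTerm (a b x : ℝ) (n : ℕ) : ℝ :=
  ascPoch a n / (ascPoch b n * n.factorial) * x ^ n

namespace kummerTerm

theorem tsum_eq_kummer (a b x : ℝ) : ∑' n, kummerTerm a b x n = kummer a b x := rfl

-- Holds without side conditions: a vanishing denominator makes both sides `0`.
theorem succ (a b x : ℝ) (n : ℕ) :
    kummerTerm a b x (n + 1) = kummerTerm a b x n * ((a + n) * x / ((b + n) * (n + 1))) := by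
  simp only [kummerTerm, ascPoch.succ, Nat.factorial_succ, pow_succ, Nat.cast_mul,
    Nat.cast_succ, div_eq_mul_inv, mul_inv]
  ring

theorem nonneg {a b x : ℝ} (ha : 0 ≤ a) (hb : 0 ≤ b) (hx : 0 ≤ x) (n : ℕ) :
    0 ≤ kummerTerm a b x n :=
  mul_nonneg (div_nonneg (ascPoch.nonneg ha n) (by have := ascPoch.nonneg hb n; positivity))
    (pow_nonneg hx n)

theorem ratio_le_half {a b x : ℝ} {n : ℕ} (hn : 1 ≤ n) (ha : |a| ≤ n) (hb : 2 * |b| ≤ n)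
    (hx : 8 * |x| ≤ n + 1) :
    |a + n| * |x| / (|b + n| * (n + 1)) ≤ 1 / 2 := by
  have hn' : (1 : ℝ) ≤ n := by exact_mod_cast hn
  have han : |a + n| ≤ 2 * n := (abs_add_le _ _).trans (by rw [Nat.abs_cast]; linarith)
  have hbn : (n : ℝ) / 2 ≤ |b + n| := by
    have := abs_sub_abs_le_abs_sub (n : ℝ) (-b)
    rw [abs_neg, Nat.abs_cast, sub_neg_eq_add, add_comm] at this
    linarith
  rw [div_le_iff₀ (mul_pos (by linarith) (by linarith))]
  calc |a + n| * |x| ≤ 2 * n * ((n + 1) / 8) := by gcongr; linarith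
    _ = 1 / 2 * (n / 2 * (n + 1)) := by ring
    _ ≤ 1 / 2 * (|b + n| * (n + 1)) := by gcongr

theorem summable (a b x : ℝ) : Summable (kummerTerm a b x) := by
  refine summable_of_ratio_norm_eventually_le (r := 1 / 2) (by norm_num) ?_
  filter_upwards [Filter.eventually_ge_atTop (max 1 ⌈max (max |a| (2 * |b|)) (8 * |x|)⌉₊)]
    with n hn
  have hN : max (max |a| (2 * |b|)) (8 * |x|) ≤ n :=
    (Nat.le_ceil _).trans (by exact_mod_cast (le_max_right _ _).trans hn)
  have hratio := ratio_le_half ((le_max_left _ _).trans hn)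
    ((le_max_left _ _).trans ((le_max_left _ _).trans hN))
    ((le_max_right _ _).trans ((le_max_left _ _).trans hN))
    (((le_max_right _ _).trans hN).trans (by linarith))
  rw [succ, norm_mul, mul_comm]
  gcongr
  rwa [Real.norm_eq_abs, abs_div, abs_mul, abs_mul, abs_of_pos (by positivity : (0 : ℝ) < n + 1)]

theorem sq_le_sub_mul_add {a b c x : ℝ} (hbc : 0 < b - c) (hcb : 0 < b + c) (n : ℕ) :
    kummerTerm a b x n ^ 2 ≤ kummerTerm a (b - c) x n * kummerTerm a (b + c) x n := by
  have hpoch : (ascPoch b n ^ 2)⁻¹ ≤ (ascPoch (b - c) n * ascPoch (b + c) n)⁻¹ :=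
    inv_anti₀ (mul_pos (ascPoch.pos hbc n) (ascPoch.pos hcb n))
      (ascPoch.sub_mul_add_le_sq hbc.le hcb.le n)
  calc kummerTerm a b x n ^ 2
      = (ascPoch a n * x ^ n / n.factorial) ^ 2 * (ascPoch b n ^ 2)⁻¹ := by
        simp only [kummerTerm]; ring
    _ ≤ (ascPoch a n * x ^ n / n.factorial) ^ 2 * (ascPoch (b - c) n * ascPoch (b + c) n)⁻¹ := by
        gcongr
    _ = kummerTerm a (b - c) x n * kummerTerm a (b + c) x n := by
        simp only [kummerTerm]; ring

end kummerTerm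

theorem statement_15 (a b c : ℝ) (ha : 0 < a) (hbc : b > c) (hc : 0 < c)
    (x : ℝ) (hx : 0 ≤ x) :
    (kummer a b x) ^ 2 ≤ kummer a (b - c) x * kummer a (b + c) x := by
  have hsub : 0 < b - c := sub_pos.mpr hbc
  have hadd : 0 < b + c := by linarith
  simp only [← kummerTerm.tsum_eq_kummer]
  exact tsum_sq_le_tsum_mul_tsum_of_sq_le_mul
    (kummerTerm.nonneg ha.le hsub.le hx) (kummerTerm.nonneg ha.le hadd.le hx)
    (kummerTerm.sq_le_sub_mul_add hsub hadd)
    (kummerTerm.summable a (b - c) x) (kummerTerm.summable a (b + c) x)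
end
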